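/- arXiv:2310.12602 — 2 statements merged into one kernel-verified Lean document; each statement's English description precedes it below -/
import Mathlib

section
/- Fix reals x > 0 and Λ > 0, and define g(λ) = x⁴ − x³·(√(x² − 4λ) + 2λ) + 2λ(Λ − λ) for λ ∈ (0, x²/4]. Then g is twice differentiable on (0, x²/4) with second derivative g''(λ) = 4x³/((x² − 4λ)^{3/2}) − 4 > 0, g(λ) → 0 as λ → 0⁺, and the equation g(λ) = 0 has at most one solution λ ∈ (0, x²/4]. -/
/-!
The first derivative is `2x³/√(x² - 4λ) - 2x³ + 2Λ - 4λ`, and differentiating once more gives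
`4x³/√((x² - 4λ)³) - 4`, which is positive because `√((x² - 4λ)³) < x³` for `λ > 0`. Hence `g` is
strictly convex on `[0, x²/4]`, continuous, and `g 0 = x⁴ - x³ √(x²) = 0`. A strictly convex
function vanishing at `0` vanishes at most once to the right of `0`: if `0 < a < b` were two more
zeros, the secant slopes over `[0, a]` and `[a, b]` would both be `0`, contradicting their strict
monotonicity.
-/

open Real Set Filter Topology

theorem StrictConvexOn.subsingleton_zeros_of_lt {s : Set ℝ} {f : ℝ → ℝ}
    (hf : StrictConvexOn ℝ s f) {c : ℝ} (hc : c ∈ s) (hfc : f c = 0) :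
    {y | y ∈ s ∧ c < y ∧ f y = 0}.Subsingleton := by
  suffices ∀ a b, c < a → f a = 0 → b ∈ s → a < b → f b ≠ 0 by
    rintro a ⟨ha, hca, hfa⟩ b ⟨hb, hcb, hfb⟩
    by_contra hab
    rcases lt_or_gt_of_ne hab with h | h
    · exact this a b hca hfa hb h hfb
    · exact this b a hcb hfb ha h hfa
  intro a b hca hfa hb hab hfb
  simpa [hfc, hfa, hfb] using hf.slope_strict_mono_adjacent hc hb hca hab

theorem Real.sqrt_pow_three {u : ℝ} (hu : 0 ≤ u) : √(u ^ 3) = u * √u := by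
  rw [pow_succ, sqrt_mul (sq_nonneg _), sqrt_sq hu]

theorem hasDerivAt_sqrt_sub_four_mul {c l : ℝ} (h : 4 * l < c) :
    HasDerivAt (fun t => √(c - 4 * t)) (-2 / √(c - 4 * l)) l := by
  refine (((hasDerivAt_id' l).const_mul 4).const_sub c |>.sqrt (by linarith)).congr_deriv ?_
  field_simp
  ring

noncomputable def g (x Λ l : ℝ) : ℝ :=
  x ^ 4 - x ^ 3 * (√(x ^ 2 - 4 * l) + 2 * l) + 2 * l * (Λ - l)

theorem continuous_g (x Λ : ℝ) : Continuous (g x Λ) := by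
  unfold g
  fun_prop

theorem g_zero {x : ℝ} (hx : 0 ≤ x) (Λ : ℝ) : g x Λ 0 = 0 := by
  simp only [g, mul_zero, sub_zero, sqrt_sq hx]
  ring

theorem hasDerivAt_g {x Λ l : ℝ} (h : 4 * l < x ^ 2) :
    HasDerivAt (g x Λ) (2 * x ^ 3 / √(x ^ 2 - 4 * l) - 2 * x ^ 3 + 2 * Λ - 4 * l) l := by
  refine ((((hasDerivAt_sqrt_sub_four_mul h).add ((hasDerivAt_id' l).const_mul 2)).const_mul
    (x ^ 3) |>.const_sub (x ^ 4)).add (((hasDerivAt_id' l).const_mul 2).mul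
      ((hasDerivAt_id' l).const_sub Λ))).congr_deriv ?_
  ring

theorem hasDerivAt_deriv_g {x Λ l : ℝ} (h : 4 * l < x ^ 2) :
    HasDerivAt (deriv (g x Λ)) (4 * x ^ 3 / √((x ^ 2 - 4 * l) ^ 3) - 4) l := by
  have hderiv : deriv (g x Λ) =ᶠ[𝓝 l]
      fun t => 2 * x ^ 3 / √(x ^ 2 - 4 * t) - 2 * x ^ 3 + 2 * Λ - 4 * t := by
    filter_upwards [eventually_lt_nhds ((lt_div_iff₀' four_pos).mpr h)] with t ht
    exact (hasDerivAt_g ((lt_div_iff₀' four_pos).mp ht)).deriv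
  have hu : 0 < x ^ 2 - 4 * l := by linarith
  have hs : √(x ^ 2 - 4 * l) ≠ 0 := (sqrt_pos.mpr hu).ne'
  refine HasDerivAt.congr_of_eventuallyEq ?_ hderiv
  refine ((((hasDerivAt_const l (2 * x ^ 3)).fun_div (hasDerivAt_sqrt_sub_four_mul h) hs
    |>.sub_const (2 * x ^ 3)).add_const (2 * Λ)).sub
      ((hasDerivAt_id' l).const_mul 4)).congr_deriv ?_
  rw [sqrt_pow_three hu.le]
  field_simp
  linear_combination -4 * x ^ 3 * sq_sqrt hu.le

theorem four_lt_four_mul_pow_three_div_sqrt {x l : ℝ} (hx : 0 < x)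
    (hl : l ∈ Ioo 0 (x ^ 2 / 4)) : 4 < 4 * x ^ 3 / √((x ^ 2 - 4 * l) ^ 3) := by
  have hu : 0 < x ^ 2 - 4 * l := by linarith [hl.2]
  have hlt : √((x ^ 2 - 4 * l) ^ 3) < x ^ 3 := by
    rw [sqrt_lt' (by positivity), show (x ^ 3) ^ 2 = (x ^ 2) ^ 3 by ring]
    exact pow_lt_pow_left₀ (by linarith [hl.1]) hu.le (by norm_num)
  rw [lt_div_iff₀ (by positivity)]
  linarith

theorem strictConvexOn_g {x : ℝ} (hx : 0 < x) (Λ : ℝ) :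
    StrictConvexOn ℝ (Icc 0 (x ^ 2 / 4)) (g x Λ) := by
  refine strictConvexOn_of_deriv2_pos (convex_Icc _ _) (continuous_g x Λ).continuousOn ?_
  intro l hl
  rw [interior_Icc] at hl
  rw [Function.iterate_succ_apply, Function.iterate_one,
    (hasDerivAt_deriv_g (by linarith [hl.2])).deriv, sub_pos]
  exact four_lt_four_mul_pow_three_div_sqrt hx hl

theorem stmt5_general (x Λ : ℝ) (hx : 0 < x) :
    let g : ℝ → ℝ := fun l => x ^ 4 - x ^ 3 * (Real.sqrt (x ^ 2 - 4 * l) + 2 * l)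
      + 2 * l * (Λ - l)
    (∀ l ∈ Set.Ioo 0 (x ^ 2 / 4),
        DifferentiableAt ℝ g l ∧
        HasDerivAt (deriv g) (4 * x ^ 3 / Real.sqrt ((x ^ 2 - 4 * l) ^ 3) - 4) l ∧
        0 < 4 * x ^ 3 / Real.sqrt ((x ^ 2 - 4 * l) ^ 3) - 4) ∧
      Filter.Tendsto g (nhdsWithin 0 (Set.Ioi 0)) (nhds 0) ∧
      {l : ℝ | l ∈ Set.Ioc 0 (x ^ 2 / 4) ∧ g l = 0}.Subsingleton := by
  refine ⟨fun l hl => ?_, ?_, ?_⟩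
  · have hl' : 4 * l < x ^ 2 := by linarith [hl.2]
    exact ⟨(hasDerivAt_g hl').differentiableAt, hasDerivAt_deriv_g hl',
      sub_pos.mpr (four_lt_four_mul_pow_three_div_sqrt hx hl)⟩
  · exact ((continuous_g x Λ).tendsto' 0 0 (g_zero hx.le Λ)).mono_left nhdsWithin_le_nhds
  · refine ((strictConvexOn_g hx Λ).subsingleton_zeros_of_lt
      (left_mem_Icc.mpr (by positivity)) (g_zero hx.le Λ)).anti ?_
    rintro l ⟨hl, hgl⟩
    exact ⟨Ioc_subset_Icc_self hl, hl.1, hgl⟩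

theorem stmt5 (x Λ : ℝ) (hx : 0 < x) (hΛ : 0 < Λ) :
    let g : ℝ → ℝ := fun l => x ^ 4 - x ^ 3 * (Real.sqrt (x ^ 2 - 4 * l) + 2 * l)
      + 2 * l * (Λ - l)
    (∀ l ∈ Set.Ioo 0 (x ^ 2 / 4),
        DifferentiableAt ℝ g l ∧
        HasDerivAt (deriv g) (4 * x ^ 3 / Real.sqrt ((x ^ 2 - 4 * l) ^ 3) - 4) l ∧
        0 < 4 * x ^ 3 / Real.sqrt ((x ^ 2 - 4 * l) ^ 3) - 4) ∧
      Filter.Tendsto g (nhdsWithin 0 (Set.Ioi 0)) (nhds 0) ∧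
      {l : ℝ | l ∈ Set.Ioc 0 (x ^ 2 / 4) ∧ g l = 0}.Subsingleton :=
  stmt5_general x Λ hx
end

section
/- Let λ > 49/9 and Λ > 0, define q(x) = (1+x)⁴ − λ(x+2)(1+x)² + λΛ − 2λ², Λ₁ = 8λ^{3/2} − 10λ and Λ₂ = (1/512)·((9λ² + 32λ)·√(9λ² + 32λ) + 27λ³ + 144λ² + 1152λ). Then Λ₁ < Λ₂, and the number of zeros of q in the interval (2√λ − 1, ∞) is: exactly one if Λ ≤ Λ₁; exactly two if Λ₁ < Λ < Λ₂; exactly one if Λ = Λ₂; and zero if Λ > Λ₂. -/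
/-!
In the variable `t = 1 + x`, `q = t⁴ - λ(t + 1)t² + λΛ - 2λ²` has derivative
`t (4t² - 3λt - 2λ)`, so for `t > 0` its only critical point is the minimum at
`t = (3λ + √(9λ² + 32λ)) / 8`. This minimum lies to the right of `t = 2√λ` exactly when
`λ > 49/9`, so on `(2√λ - 1, ∞)` the polynomial first decreases, then increases to `∞`.
Its values at the left endpoint and at the minimum are `λ(Λ - Λ₁)` and `λ(Λ - Λ₂)`, and the
count of zeros follows from the intermediate value theorem on each monotone branch.
-/

open Set Filter

section Valley

variable {f : ℝ → ℝ} {a m c : ℝ}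

theorem exists_gt_apply_eq_of_tendsto_atTop (hf : ContinuousOn f (Ici m))
    (htop : Tendsto f atTop atTop) (hc : f m < c) : ∃ x, m < x ∧ f x = c := by
  obtain ⟨b, hcb, hmb⟩ := ((htop.eventually_gt_atTop c).and (eventually_ge_atTop m)).exists
  obtain ⟨x, hx, rfl⟩ := intermediate_value_Ioc hmb (hf.mono Icc_subset_Ici_self) ⟨hc, hcb.le⟩
  exact ⟨x, hx.1, rfl⟩

theorem apply_lt_apply_of_valley (hanti : StrictAntiOn f (Icc a m))
    (hmono : StrictMonoOn f (Ici m)) {x : ℝ} (hx : a ≤ x) (hxm : x ≠ m) : f m < f x := by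
  rcases hxm.lt_or_gt with hxm | hmx
  · exact hanti ⟨hx, hxm.le⟩ ⟨hx.trans hxm.le, le_rfl⟩ hxm
  · exact hmono self_mem_Ici hmx.le hmx

theorem existsUnique_of_valley_of_apply_le (hf : ContinuousOn f (Ici m))
    (hanti : StrictAntiOn f (Icc a m)) (hmono : StrictMonoOn f (Ici m))
    (htop : Tendsto f atTop atTop) (ham : a < m) (hc : f a ≤ c) :
    ∃! x, x ∈ {x | x ∈ Ioi a ∧ f x = c} := by
  have hma : f m < f a := hanti ⟨le_rfl, ham.le⟩ ⟨ham.le, le_rfl⟩ ham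
  obtain ⟨x, hmx, hx⟩ := exists_gt_apply_eq_of_tendsto_atTop hf htop (hma.trans_le hc)
  refine ⟨x, ⟨ham.trans hmx, hx⟩, fun y ⟨hay, hy⟩ => ?_⟩
  have hmy : m ≤ y := by
    by_contra! hym
    exact (hanti ⟨le_rfl, ham.le⟩ ⟨hay.le, hym.le⟩ hay).not_ge (hc.trans_eq hy.symm)
  exact hmono.injOn hmy hmx.le (hy.trans hx.symm)

theorem exists_pair_of_valley (hf : ContinuousOn f (Ici a))
    (hanti : StrictAntiOn f (Icc a m)) (hmono : StrictMonoOn f (Ici m))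
    (htop : Tendsto f atTop atTop) (ham : a < m) (hmc : f m < c) (hca : c < f a) :
    ∃ x y, x ≠ y ∧ {x | x ∈ Ioi a ∧ f x = c} = {x, y} := by
  obtain ⟨x, ⟨hax, hxm⟩, hx⟩ :=
    intermediate_value_Ioo' ham.le (hf.mono Icc_subset_Ici_self) ⟨hmc, hca⟩
  obtain ⟨y, hmy, hy⟩ :=
    exists_gt_apply_eq_of_tendsto_atTop (hf.mono (Ici_subset_Ici.2 ham.le)) htop hmc
  refine ⟨x, y, (hxm.trans hmy).ne, Set.ext fun z => ⟨fun ⟨haz, hz⟩ => ?_, ?_⟩⟩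
  · rcases le_total z m with hzm | hmz
    · exact .inl (hanti.injOn ⟨haz.le, hzm⟩ ⟨hax.le, hxm.le⟩ (hz.trans hx.symm))
    · exact .inr (hmono.injOn hmz hmy.le (hz.trans hy.symm))
  · rintro (rfl | rfl)
    exacts [⟨hax, hx⟩, ⟨ham.trans hmy, hy⟩]

theorem existsUnique_of_valley_of_eq_min
    (hanti : StrictAntiOn f (Icc a m)) (hmono : StrictMonoOn f (Ici m))
    (ham : a < m) (hc : c = f m) :
    ∃! x, x ∈ {x | x ∈ Ioi a ∧ f x = c} := by
  refine ⟨m, ⟨ham, hc.symm⟩, fun y ⟨hay, hy⟩ => ?_⟩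
  by_contra hym
  exact (apply_lt_apply_of_valley hanti hmono hay.le hym).ne (hc.symm.trans hy.symm)

theorem eq_empty_of_valley_of_lt_min
    (hanti : StrictAntiOn f (Icc a m)) (hmono : StrictMonoOn f (Ici m)) (hc : c < f m) :
    {x | x ∈ Ioi a ∧ f x = c} = ∅ := by
  refine eq_empty_of_forall_notMem fun x ⟨hax, hx⟩ => ?_
  rcases eq_or_ne x m with rfl | hxm
  · exact hc.ne' hx
  · exact (hc.trans (apply_lt_apply_of_valley hanti hmono hax.le hxm)).ne' hx

end Valley

def quartic (lam x : ℝ) : ℝ := (1 + x) ^ 4 - lam * (x + 2) * (1 + x) ^ 2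

noncomputable def quarticCriticalPoint (lam : ℝ) : ℝ :=
  (3 * lam + √(9 * lam ^ 2 + 32 * lam)) / 8 - 1

section Quartic

variable {lam : ℝ}

theorem hasDerivAt_quartic (lam x : ℝ) :
    HasDerivAt (quartic lam) ((1 + x) * (4 * (1 + x) ^ 2 - 3 * lam * (1 + x) - 2 * lam)) x := by
  have h := (((hasDerivAt_id' x).const_add 1).pow 4).sub
    ((((hasDerivAt_id' x).add_const 2).const_mul lam).mul (((hasDerivAt_id' x).const_add 1).pow 2))
  refine h.congr_deriv ?_
  simp only [Pi.pow_apply]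
  push_cast
  ring

theorem continuous_quartic (lam : ℝ) : Continuous (quartic lam) := by
  unfold quartic; fun_prop

theorem sq_sqrt_discrim (hlam : 0 ≤ lam) :
    √(9 * lam ^ 2 + 32 * lam) ^ 2 = 9 * lam ^ 2 + 32 * lam :=
  Real.sq_sqrt (by positivity)

theorem three_mul_le_sqrt_discrim (hlam : 0 ≤ lam) : 3 * lam ≤ √(9 * lam ^ 2 + 32 * lam) :=
  Real.le_sqrt_of_sq_le (by nlinarith)

/-- `16 (4t² - 3λt - 2λ) = (8t - 3λ - r) (8t - 3λ + r)` with `r = √(9λ² + 32λ)`. -/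
theorem quadratic_neg_of_lt_root (hlam : 0 ≤ lam) {t : ℝ} (ht0 : 0 < t)
    (ht : 8 * t < 3 * lam + √(9 * lam ^ 2 + 32 * lam)) :
    4 * t ^ 2 - 3 * lam * t - 2 * lam < 0 := by
  have hr := sq_sqrt_discrim hlam
  have h3 := three_mul_le_sqrt_discrim hlam
  nlinarith [mul_pos (sub_pos.2 ht) (show 0 < 8 * t - 3 * lam + √(9 * lam ^ 2 + 32 * lam) by
    linarith)]

theorem quadratic_pos_of_root_lt (hlam : 0 ≤ lam) {t : ℝ}
    (ht : 3 * lam + √(9 * lam ^ 2 + 32 * lam) < 8 * t) :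
    0 < 4 * t ^ 2 - 3 * lam * t - 2 * lam := by
  have hr := sq_sqrt_discrim hlam
  have h3 := three_mul_le_sqrt_discrim hlam
  nlinarith [mul_pos (sub_pos.2 ht) (show 0 < 8 * t - 3 * lam + √(9 * lam ^ 2 + 32 * lam) by
    linarith)]

theorem strictAntiOn_quartic (hlam : 0 ≤ lam) :
    StrictAntiOn (quartic lam) (Icc (-1) (quarticCriticalPoint lam)) := by
  refine strictAntiOn_of_deriv_neg (convex_Icc _ _) (continuous_quartic lam).continuousOn
    fun x hx => ?_
  rw [interior_Icc, mem_Ioo, quarticCriticalPoint] at hx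
  rw [(hasDerivAt_quartic lam x).deriv]
  exact mul_neg_of_pos_of_neg (by linarith)
    (quadratic_neg_of_lt_root hlam (by linarith) (by linarith))

theorem strictMonoOn_quartic (hlam : 0 ≤ lam) :
    StrictMonoOn (quartic lam) (Ici (quarticCriticalPoint lam)) := by
  refine strictMonoOn_of_deriv_pos (convex_Ici _) (continuous_quartic lam).continuousOn
    fun x hx => ?_
  rw [interior_Ici, mem_Ioi, quarticCriticalPoint] at hx
  have h3 := three_mul_le_sqrt_discrim hlam
  rw [(hasDerivAt_quartic lam x).deriv]
  exact mul_pos (by linarith) (quadratic_pos_of_root_lt hlam (by linarith))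

theorem self_le_quartic (hlam : 0 ≤ lam) {x : ℝ} (hx : lam + 1 ≤ x) : x ≤ quartic lam x := by
  have hfactor : quartic lam x = (1 + x) ^ 2 * ((1 + x) * (1 + x - lam) - lam) := by
    unfold quartic; ring
  have h1 : 1 + x ≤ (1 + x) * (1 + x - lam) - lam := by nlinarith
  rw [hfactor]
  nlinarith

theorem tendsto_quartic_atTop (hlam : 0 ≤ lam) : Tendsto (quartic lam) atTop atTop :=
  tendsto_atTop_mono' _ ((eventually_ge_atTop (lam + 1)).mono fun _ => self_le_quartic hlam)
    tendsto_id

theorem quartic_two_mul_sqrt_sub_one (hlam : 0 ≤ lam) :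
    quartic lam (2 * √lam - 1) = lam * (2 * lam - (8 * (lam * √lam) - 10 * lam)) := by
  have hs : √lam ^ 2 = lam := Real.sq_sqrt hlam
  unfold quartic
  linear_combination (16 * √lam ^ 2 - 8 * lam * √lam + 12 * lam) * hs

theorem quartic_quarticCriticalPoint (hlam : 0 ≤ lam) :
    quartic lam (quarticCriticalPoint lam) = lam * (2 * lam - (1 / 512) *
      ((9 * lam ^ 2 + 32 * lam) * √(9 * lam ^ 2 + 32 * lam) + 27 * lam ^ 3 + 144 * lam ^ 2
        + 1152 * lam)) := by
  have hr := sq_sqrt_discrim hlam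
  set r := √(9 * lam ^ 2 + 32 * lam)
  unfold quartic quarticCriticalPoint
  linear_combination (r ^ 2 / 4096 + lam * r / 1024 - 9 * lam ^ 2 / 4096 - lam / 128) * hr

/-- With `λ = s²` the inequality reads `3s + √(9s² + 32) > 16`, an equality at `s = 7/3`. -/
theorem two_mul_sqrt_sub_one_lt_quarticCriticalPoint (hlam : 49 / 9 < lam) :
    2 * √lam - 1 < quarticCriticalPoint lam := by
  have hs : √lam ^ 2 = lam := Real.sq_sqrt (by linarith)
  have hs_gt : 7 / 3 < √lam := by
    rw [show (7 / 3 : ℝ) = √(49 / 9) by rw [show (49 / 9 : ℝ) = (7 / 3) ^ 2 by norm_num,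
      Real.sqrt_sq (by norm_num)]]
    exact Real.sqrt_lt_sqrt (by norm_num) hlam
  have hr := sq_sqrt_discrim (show 0 ≤ lam by linarith)
  have hr0 := Real.sqrt_nonneg (9 * lam ^ 2 + 32 * lam)
  unfold quarticCriticalPoint
  nlinarith

end Quartic

theorem stmt16_general (lam Λ : ℝ) (h0 : 49 / 9 < lam) :
    let q : ℝ → ℝ := fun x => (1 + x) ^ 4 - lam * (x + 2) * (1 + x) ^ 2 + lam * Λ - 2 * lam ^ 2
    let Λ₁ : ℝ := 8 * (lam * Real.sqrt lam) - 10 * lam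
    let Λ₂ : ℝ := (1 / 512) * ((9 * lam ^ 2 + 32 * lam) * Real.sqrt (9 * lam ^ 2 + 32 * lam)
      + 27 * lam ^ 3 + 144 * lam ^ 2 + 1152 * lam)
    let Z : Set ℝ := {x : ℝ | x ∈ Set.Ioi (2 * Real.sqrt lam - 1) ∧ q x = 0}
    Λ₁ < Λ₂ ∧
      (Λ ≤ Λ₁ → ∃! x : ℝ, x ∈ Z) ∧
      (Λ₁ < Λ → Λ < Λ₂ → ∃ a b : ℝ, a ≠ b ∧ Z = {a, b}) ∧
      (Λ = Λ₂ → ∃! x : ℝ, x ∈ Z) ∧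
      (Λ₂ < Λ → Z = ∅) := by
  intro q Λ₁ Λ₂ Z
  have hlam : 0 < lam := by linarith
  have hZ : Z = {x | x ∈ Ioi (2 * √lam - 1) ∧ quartic lam x = lam * (2 * lam - Λ)} := by
    ext x
    refine and_congr_right fun _ => ?_
    simp only [q, quartic]
    constructor <;> intro h <;> linarith
  have ham := two_mul_sqrt_sub_one_lt_quarticCriticalPoint h0
  have hanti := (strictAntiOn_quartic hlam.le).mono
    (Icc_subset_Icc_left (by linarith [Real.sqrt_nonneg lam] : -1 ≤ 2 * √lam - 1))
  have hmono := strictMonoOn_quartic hlam.le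
  have htop := tendsto_quartic_atTop hlam.le
  have hcont : ContinuousOn (quartic lam) univ := (continuous_quartic lam).continuousOn
  have hleft : quartic lam (2 * √lam - 1) = lam * (2 * lam - Λ₁) :=
    quartic_two_mul_sqrt_sub_one hlam.le
  have hmin : quartic lam (quarticCriticalPoint lam) = lam * (2 * lam - Λ₂) :=
    quartic_quarticCriticalPoint hlam.le
  have hmin_lt_left := hanti ⟨le_rfl, ham.le⟩ ⟨ham.le, le_rfl⟩ ham
  rw [hleft, hmin] at hmin_lt_left
  rw [hZ]
  refine ⟨by nlinarith, fun h => ?_, fun h₁ h₂ => ?_, fun h => ?_, fun h => ?_⟩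
  · exact existsUnique_of_valley_of_apply_le (hcont.mono (subset_univ _)) hanti hmono htop ham
      (by rw [hleft]; gcongr)
  · exact exists_pair_of_valley (hcont.mono (subset_univ _)) hanti hmono htop ham
      (by rw [hmin]; gcongr) (by rw [hleft]; gcongr)
  · exact existsUnique_of_valley_of_eq_min hanti hmono ham (by rw [hmin, h])
  · exact eq_empty_of_valley_of_lt_min hanti hmono (by rw [hmin]; gcongr)

theorem stmt16 (lam Λ : ℝ) (h0 : 49 / 9 < lam) (hΛ : 0 < Λ) :
    let q : ℝ → ℝ := fun x => (1 + x) ^ 4 - lam * (x + 2) * (1 + x) ^ 2 + lam * Λ - 2 * lam ^ 2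
    let Λ₁ : ℝ := 8 * (lam * Real.sqrt lam) - 10 * lam
    let Λ₂ : ℝ := (1 / 512) * ((9 * lam ^ 2 + 32 * lam) * Real.sqrt (9 * lam ^ 2 + 32 * lam)
      + 27 * lam ^ 3 + 144 * lam ^ 2 + 1152 * lam)
    let Z : Set ℝ := {x : ℝ | x ∈ Set.Ioi (2 * Real.sqrt lam - 1) ∧ q x = 0}
    Λ₁ < Λ₂ ∧
      (Λ ≤ Λ₁ → ∃! x : ℝ, x ∈ Z) ∧
      (Λ₁ < Λ → Λ < Λ₂ → ∃ a b : ℝ, a ≠ b ∧ Z = {a, b}) ∧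
      (Λ = Λ₂ → ∃! x : ℝ, x ∈ Z) ∧
      (Λ₂ < Λ → Z = ∅) :=
  stmt16_general lam Λ h0
end
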